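/- For every labeled binary tree t and every k >= 0, the k-th order label-shape entropy satisfies H_k(t) <= H^deg(t) + H^{deg,ell}_k(t). -/

import Mathlib

/-- Labeled binary trees: every node has 0 or 2 children. -/
inductive LBT (σ : Type) where
  | leaf (a : σ) : LBT σ
  | node (a : σ) (l r : LBT σ) : LBT σ

/-- List of (history, label, degree) triples of a binary tree, one per node.
The history records alternately labels and direction bits (`false` = left). -/
def ldata {σ} (hist : List (σ × Bool)) : LBT σ → List (List (σ × Bool) × σ × ℕ)
  | .leaf a => [(hist, a, 0)]
  | .node a l r =>
      (hist, a, 2) :: (ldata (hist ++ [(a, false)]) l ++ ldata (hist ++ [(a, true)]) r)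

/-- Last `k` entries of a list. -/
def lastN {α} (k : ℕ) (l : List α) : List α := l.drop (l.length - k)

/-- Generic empirical entropy in per-node form: for each node `e` of `D` we add
`log2 (#{e' | cond e' = cond e} / #{e' | cond e' = cond e ∧ val e' = val e})`.
Grouping nodes by the pair `(cond, val)` recovers the usual form
`∑_z ∑_w m_{z,w} log2 (m_z / m_{z,w})`. -/
noncomputable def entropySum {α β γ : Type*} [DecidableEq β] [DecidableEq γ]
    (D : List α) (cond : α → β) (val : α → γ) : ℝ :=
  (D.map (fun e => Real.logb 2
    ((D.countP (fun e' => decide (cond e' = cond e)) : ℝ) /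
     (D.countP (fun e' => decide (cond e' = cond e ∧ val e' = val e)) : ℝ)))).sum

/-- `k`-history of a node given its full history: the last `k` entries after
padding on the left with `(box, false)`. -/
def kHist {σ} (box : σ) (k : ℕ) (h : List (σ × Bool)) : List (σ × Bool) :=
  lastN k (List.replicate k (box, false) ++ h)

/-- `k`-label-history given the list of ancestor labels (padded with `box`). -/
def kLabHist {σ} (box : σ) (k : ℕ) (h : List σ) : List σ :=
  lastN k (List.replicate k box ++ h)

/-- `k`-th order label-shape entropy of a labeled binary tree. -/
noncomputable def Hls {σ} [DecidableEq σ] (box : σ) (k : ℕ) (t : LBT σ) : ℝ :=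
  entropySum (ldata [] t) (fun e => kHist box k e.1) (fun e => e.2)

/-- `k`-th order label entropy of a labeled binary tree. -/
noncomputable def HlB {σ} [DecidableEq σ] (box : σ) (k : ℕ) (t : LBT σ) : ℝ :=
  entropySum (ldata [] t) (fun e => kLabHist box k (e.1.map Prod.fst)) (fun e => e.2.1)

/-- `k`-th order label-degree entropy of a labeled binary tree. -/
noncomputable def HldB {σ} [DecidableEq σ] (box : σ) (k : ℕ) (t : LBT σ) : ℝ :=
  entropySum (ldata [] t)
    (fun e => (kLabHist box k (e.1.map Prod.fst), e.2.1)) (fun e => e.2.2)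

/-- `k`-th order degree-label entropy of a labeled binary tree. -/
noncomputable def HdlB {σ} [DecidableEq σ] (box : σ) (k : ℕ) (t : LBT σ) : ℝ :=
  entropySum (ldata [] t)
    (fun e => (kLabHist box k (e.1.map Prod.fst), e.2.2)) (fun e => e.2.1)

/-- Degree entropy of a labeled binary tree: `∑_i n_i log2(|t|/n_i)`. -/
noncomputable def HdegB {σ} [DecidableEq σ] (t : LBT σ) : ℝ :=
  entropySum (ldata [] t) (fun _ => ()) (fun e => e.2.2)

/-! Write the label-shape symbol of a node as the pair (label, degree). The chain rule for
conditional empirical entropy splits `H_k(t)` into the entropy of the degree given the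
`k`-history plus the entropy of the label given the `k`-history and the degree. Coarsening the
conditioning can only increase a conditional entropy (the log-sum inequality, which per node is
`log x ≤ x - 1`); coarsen the first context to nothing and the second to the `k`-label-history
and the degree, giving `H^deg(t)` and `H^{deg,ℓ}_k(t)`. -/

open Real

section FiberCard

variable {α β γ : Type*} [DecidableEq β] [DecidableEq γ]

def fiberCard (D : List α) (key : α → β) (b : β) : ℕ :=
  D.countP (key · = b)

theorem fiberCard_pos {D : List α} (key : α → β) {e : α} (he : e ∈ D) :
    0 < fiberCard D key (key e) :=
  List.countP_pos_iff.2 ⟨e, he, by simp⟩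

theorem fiberCard_comp_of_injective (D : List α) (key : α → β) {g : β → γ}
    (hg : Function.Injective g) (b : β) :
    fiberCard D (fun e => g (key e)) (g b) = fiberCard D key b := by
  simp only [fiberCard, hg.eq_iff]

theorem sum_fiberCard_prod (D : List α) (key : α → β) (val : α → γ) (b : β) {S : Finset γ}
    (hS : ∀ e ∈ D, val e ∈ S) :
    ∑ w ∈ S, fiberCard D (fun e => (key e, val e)) (b, w) = fiberCard D key b := by
  induction D with
  | nil => simp [fiberCard]
  | cons a D ih =>
    simp only [fiberCard, List.countP_cons, Finset.sum_add_distrib, Prod.mk.injEq,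
      decide_eq_true_eq] at ih ⊢
    rw [ih fun e he => hS e (List.mem_cons_of_mem a he)]
    by_cases hab : key a = b
    · simp [hab, hS a List.mem_cons_self]
    · simp [hab]

theorem sum_fiberCard (D : List α) (key : α → β) {S : Finset β} (hS : ∀ e ∈ D, key e ∈ S) :
    ∑ b ∈ S, fiberCard D key b = D.length := by
  have h := sum_fiberCard_prod D (fun _ => ()) key () hS
  simp only [fiberCard_comp_of_injective D key (Prod.mk_right_injective ())] at h
  rw [h]
  simp [fiberCard]

theorem sum_map_div_fiberCard (D : List α) (key : α → β) (h : β → ℝ) :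
    (D.map fun e => h (key e) / fiberCard D key (key e)).sum =
      ∑ b ∈ (D.map key).toFinset, h b := by
  have hmap : (D.map key).map (fun b => h b / fiberCard D key b) =
      D.map fun e => h (key e) / fiberCard D key (key e) := List.map_map
  rw [← hmap, Finset.sum_list_map_count]
  refine Finset.sum_congr rfl fun b hb => ?_
  obtain ⟨e, he, rfl⟩ := List.mem_map.1 (List.mem_toFinset.1 hb)
  have hcount : (D.map key).count (key e) = fiberCard D key (key e) := by
    rw [List.count, List.countP_map]; rfl
  have hpos : (0 : ℝ) < fiberCard D key (key e) := Nat.cast_pos.2 (fiberCard_pos key he)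
  rw [hcount, nsmul_eq_mul, mul_div_cancel₀ _ hpos.ne']

end FiberCard

theorem List.sum_map_sub_one_div {α : Type*} (l : List α) (f : α → ℝ) (c : ℝ) :
    (l.map fun a => (f a - 1) / c).sum = ((l.map f).sum - l.length) / c := by
  induction l with
  | nil => simp
  | cons a l ih => simp [ih]; ring

theorem logb_le_logb_add_div_sub_one {b x y : ℝ} (hb : 1 < b) (hx : 0 < x) (hy : 0 < y) :
    logb b x ≤ logb b y + (x / y - 1) / log b := by
  rw [← sub_le_iff_le_add', ← logb_div hx.ne' hy.ne', logb]
  exact div_le_div_of_nonneg_right (log_le_sub_one_of_pos (div_pos hx hy)) (log_pos hb).le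

section EntropySum

variable {α β γ : Type*} [DecidableEq β] [DecidableEq γ]

noncomputable def condRatio (D : List α) (cond : α → β) (val : α → γ) (e : α) : ℝ :=
  fiberCard D cond (cond e) / fiberCard D (fun e => (cond e, val e)) (cond e, val e)

theorem condRatio_pos {D : List α} (cond : α → β) (val : α → γ) {e : α} (he : e ∈ D) :
    0 < condRatio D cond val e :=
  div_pos (Nat.cast_pos.2 (fiberCard_pos _ he)) (Nat.cast_pos.2 (fiberCard_pos _ he))

theorem entropySum_eq_sum_logb_condRatio (D : List α) (cond : α → β) (val : α → γ) :
    entropySum D cond val = (D.map fun e => logb 2 (condRatio D cond val e)).sum := by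
  simp [entropySum, condRatio, fiberCard, Prod.ext_iff]

theorem entropySum_prod {δ : Type*} [DecidableEq δ] (D : List α) (cond : α → β)
    (val₁ : α → γ) (val₂ : α → δ) :
    entropySum D cond (fun e => (val₁ e, val₂ e)) =
      entropySum D cond val₂ + entropySum D (fun e => (cond e, val₂ e)) val₁ := by
  simp only [entropySum_eq_sum_logb_condRatio, condRatio, ← List.sum_map_add]
  refine congrArg List.sum (List.map_congr_left fun e he => ?_)
  have hreassoc : fiberCard D (fun e => (cond e, val₁ e, val₂ e)) (cond e, val₁ e, val₂ e) =
      fiberCard D (fun e => ((cond e, val₂ e), val₁ e)) ((cond e, val₂ e), val₁ e) :=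
    (fiberCard_comp_of_injective D (fun e => (cond e, val₁ e, val₂ e))
      (g := fun p => ((p.1, p.2.2), p.2.1)) (fun p q h => by grind) _).symm
  rw [hreassoc, ← logb_mul, div_mul_div_cancel₀] <;> simp [(fiberCard_pos _ he).ne']

/- Grouped by the pair `(cond e, val e) = (z, w)`, the sum becomes
`∑_{z,w} m_z m_{f z, w} / m_{f z}`; summing over `w` first leaves `∑_z m_z = |D|`. -/
theorem sum_map_condRatio_div_condRatio_le_length {δ : Type*} [DecidableEq δ] (D : List α)
    (cond : α → β) (f : β → δ) (val : α → γ) :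
    (D.map fun e => condRatio D cond val e / condRatio D (fun e => f (cond e)) val e).sum ≤
      D.length := by
  set h : β × γ → ℝ := fun p => fiberCard D cond p.1 *
    fiberCard D (fun e => (f (cond e), val e)) (f p.1, p.2) /
    fiberCard D (fun e => f (cond e)) (f p.1)
  have hterm : ∀ e, condRatio D cond val e / condRatio D (fun e => f (cond e)) val e =
      h (cond e, val e) / fiberCard D (fun e => (cond e, val e)) (cond e, val e) := by
    intro e
    simp only [condRatio, h, div_div_eq_mul_div]
    ring
  have hfiber : ∀ z ∈ (D.map cond).toFinset,
      ∑ w ∈ (D.map val).toFinset, h (z, w) = fiberCard D cond z := by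
    intro z hz
    obtain ⟨e, he, rfl⟩ := List.mem_map.1 (List.mem_toFinset.1 hz)
    have hne : (fiberCard D (fun e => f (cond e)) (f (cond e)) : ℝ) ≠ 0 :=
      Nat.cast_ne_zero.2 (fiberCard_pos _ he).ne'
    simp only [h, ← Finset.sum_div, ← Finset.mul_sum, ← Nat.cast_sum,
      sum_fiberCard_prod D (fun e => f (cond e)) val (f (cond e)) fun e he =>
        List.mem_toFinset.2 (List.mem_map_of_mem he)]
    exact mul_div_cancel_right₀ _ hne
  rw [List.map_congr_left fun e _ => hterm e, sum_map_div_fiberCard D (fun e => (cond e, val e)) h]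
  calc ∑ p ∈ (D.map fun e => (cond e, val e)).toFinset, h p
      ≤ ∑ p ∈ (D.map cond).toFinset ×ˢ (D.map val).toFinset, h p := by
        refine Finset.sum_le_sum_of_subset_of_nonneg (fun p hp => ?_) fun p _ _ => by positivity
        obtain ⟨e, he, rfl⟩ := List.mem_map.1 (List.mem_toFinset.1 hp)
        simp only [Finset.mem_product, List.mem_toFinset]
        exact ⟨List.mem_map_of_mem he, List.mem_map_of_mem he⟩
    _ = ∑ z ∈ (D.map cond).toFinset, (fiberCard D cond z : ℝ) := by
        rw [Finset.sum_product]
        exact Finset.sum_congr rfl hfiber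
    _ = D.length := by
        rw [← Nat.cast_sum, sum_fiberCard D cond fun e he =>
          List.mem_toFinset.2 (List.mem_map_of_mem he)]

theorem entropySum_le_entropySum_comp {δ : Type*} [DecidableEq δ] (D : List α)
    (cond : α → β) (f : β → δ) (val : α → γ) :
    entropySum D cond val ≤ entropySum D (fun e => f (cond e)) val := by
  set r := condRatio D cond val
  set r' := condRatio D (fun e => f (cond e)) val
  simp only [entropySum_eq_sum_logb_condRatio]
  calc (D.map fun e => logb 2 (r e)).sum
      ≤ (D.map fun e => logb 2 (r' e) + (r e / r' e - 1) / log 2).sum :=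
        List.sum_le_sum fun e he => logb_le_logb_add_div_sub_one one_lt_two
          (condRatio_pos _ _ he) (condRatio_pos _ _ he)
    _ = (D.map fun e => logb 2 (r' e)).sum +
          ((D.map fun e => r e / r' e).sum - D.length) / log 2 := by
        rw [List.sum_map_add, List.sum_map_sub_one_div]
    _ ≤ (D.map fun e => logb 2 (r' e)).sum :=
        add_le_of_nonpos_right <| div_nonpos_of_nonpos_of_nonneg
          (sub_nonpos.2 (sum_map_condRatio_div_condRatio_le_length D cond f val))
          (log_nonneg one_le_two)

end EntropySum

theorem kLabHist_map_fst {σ : Type} (box : σ) (k : ℕ) (h : List (σ × Bool)) :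
    kLabHist box k (h.map Prod.fst) = (kHist box k h).map Prod.fst := by
  simp [kHist, kLabHist, lastN, List.map_drop]

/-- For every labeled binary tree `t` and every `k ≥ 0`,
`H_k(t) ≤ H^deg(t) + H^{deg,ℓ}_k(t)`. -/
theorem Hls_le_HdegB_add_HdlB {σ : Type} [DecidableEq σ] (box : σ) (k : ℕ) (t : LBT σ) :
    Hls box k t ≤ HdegB t + HdlB box k t := by
  have hchain : Hls box k t =
      entropySum (ldata [] t) (fun e => kHist box k e.1) (fun e => e.2.2) +
        entropySum (ldata [] t) (fun e => (kHist box k e.1, e.2.2)) (fun e => e.2.1) :=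
    entropySum_prod (ldata [] t) _ (fun e => e.2.1) (fun e => e.2.2)
  have hdeg : entropySum (ldata [] t) (fun e => kHist box k e.1) (fun e => e.2.2) ≤ HdegB t :=
    entropySum_le_entropySum_comp (ldata [] t) _ (fun _ => ()) _
  have hlab : entropySum (ldata [] t) (fun e => (kHist box k e.1, e.2.2)) (fun e => e.2.1) ≤
      HdlB box k t := by
    have h := entropySum_le_entropySum_comp (ldata [] t) (fun e => (kHist box k e.1, e.2.2))
      (fun p => (p.1.map Prod.fst, p.2)) (fun e => e.2.1)
    simpa only [HdlB, kLabHist_map_fst] using h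
  rw [hchain]
  exact add_le_add hdeg hlab
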